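/- arXiv:1605.05219 — 4 statements merged into one kernel-verified Lean document; each statement's English description precedes it below -/
import Mathlib

section
/- Let A be a finite set of positive integers, let ∘ ∉ A, let S = A ∪ {∘}, let γ ∈ ℕ be arbitrary, and define w(X) = γ if ∘ ∈ X and w(X) = Σ_{a∈X} a otherwise. Then there exists B ⊆ A with Σ_{b∈B} b = k if and only if there exists a partition {S_1,...,S_n} of S with Σ_{i=1}^n w(S_i) = k + γ. -/
/-- `P` is a partition of the finite set `S`: blocks are nonempty, pairwise
disjoint, and their union is `S`. -/
def IsPartitionOf (P : Finset (Finset ℕ)) (S : Finset ℕ) : Prop :=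
  (∀ B ∈ P, B.Nonempty) ∧
  (∀ B ∈ P, ∀ C ∈ P, B ≠ C → Disjoint B C) ∧
  P.biUnion id = S

/-! The block `C` containing `o` costs `γ` and every other block costs the sum of its elements,
so a partition of `insert o A` costs `γ + ∑ (A \ C)`. Conversely, `B ⊆ A` is realised by the
partition into the block `insert o A \ B` and the singletons of `B`. -/

open Finset

def subsetCost (o γ : ℕ) (X : Finset ℕ) : ℕ := if o ∈ X then γ else ∑ a ∈ X, a

theorem Finpartition.isPartitionOf_parts {S : Finset ℕ} (F : Finpartition S) :
    IsPartitionOf F.parts S :=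
  ⟨fun _ ↦ F.nonempty_of_mem_parts, fun _ hB _ hC ↦ F.disjoint hB hC, F.biUnion_parts⟩

namespace IsPartitionOf

variable {P : Finset (Finset ℕ)} {S C : Finset ℕ}

theorem exists_mem_of_mem (hP : IsPartitionOf P S) {x : ℕ} (hx : x ∈ S) : ∃ C ∈ P, x ∈ C := by
  rw [← hP.2.2] at hx
  simpa using hx

theorem subset_of_mem (hP : IsPartitionOf P S) (hC : C ∈ P) : C ⊆ S :=
  hP.2.2 ▸ subset_biUnion_of_mem id hC

theorem notMem_of_mem_erase (hP : IsPartitionOf P S) (hC : C ∈ P) {D : Finset ℕ}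
    (hD : D ∈ P.erase C) {x : ℕ} (hx : x ∈ C) : x ∉ D :=
  disjoint_left.1 (hP.2.1 C hC D (mem_of_mem_erase hD) (ne_of_mem_erase hD).symm) hx

theorem sum_sum {M : Type*} [AddCommMonoid M] (hP : IsPartitionOf P S) (f : ℕ → M) :
    ∑ D ∈ P, ∑ x ∈ D, f x = ∑ x ∈ S, f x := by
  rw [← hP.2.2]
  exact (sum_biUnion fun D hD E hE ↦ hP.2.1 D hD E hE).symm

theorem sum_sum_erase {M : Type*} [AddCancelCommMonoid M] (hP : IsPartitionOf P S)
    (hC : C ∈ P) (f : ℕ → M) : ∑ D ∈ P.erase C, ∑ x ∈ D, f x = ∑ x ∈ S \ C, f x := by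
  apply add_left_cancel (a := ∑ x ∈ C, f x)
  rw [add_sum_erase P (fun D ↦ ∑ x ∈ D, f x) hC, hP.sum_sum, ← sum_sdiff (hP.subset_of_mem hC),
    add_comm]

theorem sum_subsetCost {o γ : ℕ} (hP : IsPartitionOf P S) (hC : C ∈ P) (hoC : o ∈ C) :
    ∑ D ∈ P, subsetCost o γ D = γ + ∑ a ∈ S \ C, a := by
  rw [← add_sum_erase P _ hC, subsetCost, if_pos hoC]
  congr 1
  calc ∑ D ∈ P.erase C, subsetCost o γ D = ∑ D ∈ P.erase C, ∑ a ∈ D, a :=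
        sum_congr rfl fun D hD ↦ if_neg (hP.notMem_of_mem_erase hC hD hoC)
    _ = ∑ a ∈ S \ C, a := hP.sum_sum_erase hC id

end IsPartitionOf

theorem exists_isPartitionOf_sum_subsetCost {o : ℕ} (γ : ℕ) {S B : Finset ℕ} (hBS : B ⊆ S)
    (hoS : o ∈ S) (hoB : o ∉ B) :
    ∃ P, IsPartitionOf P S ∧ ∑ D ∈ P, subsetCost o γ D = γ + ∑ b ∈ B, b := by
  have hoSB : o ∈ S \ B := mem_sdiff.2 ⟨hoS, hoB⟩
  -- `⊥` is the partition of `B` into singletons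
  let F : Finpartition S := (⊥ : Finpartition B).extend (ne_empty_of_mem hoSB) disjoint_sdiff
    (sup_sdiff_cancel_right hBS)
  have hSB : S \ B ∉ (⊥ : Finpartition B).parts := by
    intro hSB
    obtain ⟨b, hb, hbSB⟩ := Finpartition.mem_bot_iff.1 hSB
    rw [← hbSB, mem_singleton] at hoSB
    exact hoB (hoSB ▸ hb)
  refine ⟨F.parts, F.isPartitionOf_parts, ?_⟩
  rw [Finpartition.extend_parts, sum_insert hSB, subsetCost, if_pos hoSB, Finpartition.parts_bot,
    sum_map]
  refine congrArg (γ + ·) (sum_congr rfl fun b hb ↦ ?_)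
  have hob : o ∉ ({b} : Finset ℕ) := fun h ↦ hoB (mem_singleton.1 h ▸ hb)
  rw [Function.Embedding.coeFn_mk, subsetCost, if_neg hob, sum_singleton]

theorem subsetSum_iff_subsetCost_general (A : Finset ℕ)
    (o : ℕ) (ho : o ∉ A) (γ k : ℕ)
    (w : Finset ℕ → ℕ)
    (hw : ∀ X, w X = if o ∈ X then γ else ∑ a ∈ X, a) :
    (∃ B ⊆ A, ∑ b ∈ B, b = k) ↔
      ∃ P : Finset (Finset ℕ), IsPartitionOf P (insert o A) ∧
        ∑ B ∈ P, w B = k + γ := by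
  obtain rfl : w = subsetCost o γ := funext hw
  constructor
  · rintro ⟨B, hBA, rfl⟩
    obtain ⟨P, hP, hcost⟩ := exists_isPartitionOf_sum_subsetCost γ
      (hBA.trans (subset_insert o A)) (mem_insert_self o A) fun hoB ↦ ho (hBA hoB)
    exact ⟨P, hP, hcost.trans (add_comm _ _)⟩
  · rintro ⟨P, hP, hcost⟩
    obtain ⟨C, hC, hoC⟩ := hP.exists_mem_of_mem (mem_insert_self o A)
    refine ⟨A \ C, sdiff_subset, ?_⟩
    have hcostC := hP.sum_subsetCost (γ := γ) hC hoC
    rw [insert_sdiff_of_mem A hoC] at hcostC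
    omega

/-- Correctness of the Subset Sum → Subset Cost reduction: with
`S = A ∪ {∘}` and `w(X) = γ` if `∘ ∈ X` and `w(X) = Σ_{a ∈ X} a` otherwise,
there is `B ⊆ A` with `Σ_{b∈B} b = k` iff there is a partition of `S`
of total cost `k + γ`. -/
theorem subsetSum_iff_subsetCost (A : Finset ℕ) (hA : ∀ a ∈ A, 0 < a)
    (o : ℕ) (ho : o ∉ A) (γ k : ℕ)
    (w : Finset ℕ → ℕ)
    (hw : ∀ X, w X = if o ∈ X then γ else ∑ a ∈ X, a) :
    (∃ B ⊆ A, ∑ b ∈ B, b = k) ↔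
      ∃ P : Finset (Finset ℕ), IsPartitionOf P (insert o A) ∧
        ∑ B ∈ P, w B = k + γ :=
  subsetSum_iff_subsetCost_general A o ho γ k w hw
end

section
/- The semi-join R(t̄) ⋉ T(v̄) semantics is correct: for a guard fact f conforming to R(t̄) with join key z̄ (the variables common to t̄ and v̄), there exists a conditional fact g conforming to T(v̄) with π_{v̄;z̄}(g) = π_{t̄;z̄}(f) if and only if there is a substitution σ with σ(t̄) equal to the tuple of f and T(σ(v̄')) in the database for some extension σ' of σ to the variables of v̄. -/
/-! The two facts are glued into one tuple `f ++ g` over the term vector `t̄ ++ v̄`. Agreement on the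
join key makes the glued tuple conform, and a conforming tuple is always a substitution instance;
that single substitution serves as both `σ` and `σ'`. Conversely, every substitution instance
conforms, and `σ'` agrees with `σ` on the join key. -/

/-- A tuple of data values conforms to a vector of terms (terms are data
values `Sum.inl d` or variables `Sum.inr x`). -/
def Conforms {D V : Type*} {n : ℕ} (a : Fin n → D) (t : Fin n → D ⊕ V) : Prop :=
  (∀ i j, t i = t j → a i = a j) ∧ (∀ i (d : D), t i = Sum.inl d → d = a i)

/-- Applying a substitution to a term. -/
def applySubst {D V : Type*} (σ : V → D) : D ⊕ V → D :=
  Sum.elim id σ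

section Substitution

variable {D V : Type*} {n : ℕ}

theorem conforms_applySubst (σ : V → D) (t : Fin n → D ⊕ V) :
    Conforms (fun i => applySubst σ (t i)) t :=
  ⟨fun i j hij => by simp only [hij], fun i d hid => by simp [hid, applySubst]⟩

theorem Conforms.exists_applySubst_eq [Nonempty D] {a : Fin n → D} {t : Fin n → D ⊕ V}
    (ha : Conforms a t) : ∃ σ : V → D, (fun i => applySubst σ (t i)) = a := by
  classical
  refine ⟨fun x => if h : ∃ i, t i = Sum.inr x then a h.choose else Classical.arbitrary D, ?_⟩
  funext i
  cases hti : t i with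
  | inl d => exact ha.2 i d hti
  | inr x =>
    have h : ∃ i, t i = Sum.inr x := ⟨i, hti⟩
    simpa [applySubst, dif_pos h] using ha.1 _ _ (h.choose_spec.trans hti.symm)

theorem Conforms.append {m : ℕ} {a : Fin m → D} {b : Fin n → D}
    {t : Fin m → D ⊕ V} {v : Fin n → D ⊕ V} (ha : Conforms a t) (hb : Conforms b v)
    (hagree : ∀ i j x, t i = Sum.inr x → v j = Sum.inr x → a i = b j) :
    Conforms (Fin.append a b) (Fin.append t v) := by
  have cross : ∀ i j, t i = v j → a i = b j := by
    intro i j hij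
    cases hti : t i with
    | inl d => exact (ha.2 i d hti).symm.trans (hb.2 j d (hij ▸ hti))
    | inr x => exact hagree i j x hti (hij ▸ hti)
  refine ⟨fun k l hkl => ?_, fun k d hkd => ?_⟩
  · induction k using Fin.addCases <;> induction l using Fin.addCases <;>
      simp only [Fin.append_left, Fin.append_right] at hkl ⊢
    exacts [ha.1 _ _ hkl, cross _ _ hkl, (cross _ _ hkl.symm).symm, hb.1 _ _ hkl]
  · induction k using Fin.addCases <;> simp only [Fin.append_left, Fin.append_right] at hkd ⊢
    exacts [ha.2 _ _ hkd, hb.2 _ _ hkd]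

end Substitution

/-- Correctness of the semi-join `R(t̄) ⋉ T(v̄)` semantics: for a guard fact
`f` conforming to `R(t̄)`, there is a conditional fact `g ∈ T` conforming to
`T(v̄)` agreeing with `f` on the join key (the variables shared by `t̄` and
`v̄`) iff there is a substitution `σ` with `σ(t̄) = f` and an extension `σ'`
of `σ` (agreeing with `σ` on the variables of `t̄`) with `σ'(v̄) ∈ T`. -/
theorem semijoin_semantics_correct {D V : Type*} [Nonempty D] {m p : ℕ}
    (t : Fin m → D ⊕ V) (v : Fin p → D ⊕ V)
    (Tfacts : Set (Fin p → D))
    (f : Fin m → D) (hf : Conforms f t) :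
    (∃ g ∈ Tfacts, Conforms g v ∧
        ∀ (i : Fin m) (j : Fin p) (x : V),
          t i = Sum.inr x → v j = Sum.inr x → f i = g j) ↔
    (∃ σ : V → D, (fun i => applySubst σ (t i)) = f ∧
        ∃ σ' : V → D,
          (∀ x : V, (∃ i, t i = Sum.inr x) → σ' x = σ x) ∧
          (fun j => applySubst σ' (v j)) ∈ Tfacts) := by
  constructor
  · rintro ⟨g, hg, hgv, hagree⟩
    obtain ⟨τ, hτ⟩ := (hf.append hgv hagree).exists_applySubst_eq
    have hτt : (fun i => applySubst τ (t i)) = f := funext fun i => by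
      simpa only [Fin.append_left] using congrFun hτ (Fin.castAdd p i)
    have hτv : (fun j => applySubst τ (v j)) = g := funext fun j => by
      simpa only [Fin.append_right] using congrFun hτ (Fin.natAdd m j)
    exact ⟨τ, hτt, τ, fun _ _ => rfl, hτv ▸ hg⟩
  · rintro ⟨σ, rfl, σ', hext, hT⟩
    refine ⟨_, hT, conforms_applySubst σ' v, fun i j x hti hvj => ?_⟩
    simp [applySubst, hti, hvj, hext x ⟨i, hti⟩]
end

section
/- Correctness of the repartition-join MapReduce evaluation of a single semi-join: the set of tuples output by the reduce stage (output ā for each request message [Req; Out ā] in a group containing at least one assert message) equals the result of the query Z := SELECT w̄ FROM α WHERE κ. -/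
section SharedVariables

variable {D V : Type*} {m p s : ℕ}

def AgreeOnSharedVars (f : Fin m → D) (t : Fin m → D ⊕ V) (g : Fin p → D) (v : Fin p → D ⊕ V) :
    Prop :=
  ∀ (i : Fin m) (j : Fin p) (x : V), t i = Sum.inr x → v j = Sum.inr x → f i = g j

theorem agreeOnSharedVars_iff_forall_key_eq {f : Fin m → D} {t : Fin m → D ⊕ V}
    {g : Fin p → D} {v : Fin p → D ⊕ V} (hft : Conforms f t) (hgv : Conforms g v)
    {z : Fin s → V} {pzt : Fin s → Fin m} {pzv : Fin s → Fin p}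
    (hzt : ∀ l, t (pzt l) = Sum.inr (z l)) (hzv : ∀ l, v (pzv l) = Sum.inr (z l))
    (hzcover : ∀ x : V, (∃ i, t i = Sum.inr x) → (∃ j, v j = Sum.inr x) → ∃ l, z l = x) :
    AgreeOnSharedVars f t g v ↔ ∀ l, f (pzt l) = g (pzv l) := by
  refine ⟨fun h l => h (pzt l) (pzv l) (z l) (hzt l) (hzv l), fun h i j x hti hvj => ?_⟩
  obtain ⟨l, rfl⟩ := hzcover x ⟨i, hti⟩ ⟨j, hvj⟩
  calc f i = f (pzt l) := hft.1 i (pzt l) (by rw [hti, hzt])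
    _ = g (pzv l) := h l
    _ = g j := hgv.1 (pzv l) j (by rw [hvj, hzv])

end SharedVariables

theorem repartition_join_correct_general {D V : Type*} {m p q s : ℕ}
    (t : Fin m → D ⊕ V) (v : Fin p → D ⊕ V)
    (Rfacts : Set (Fin m → D)) (Tfacts : Set (Fin p → D))
    -- output variables w̄ and their positions in the guard
    (posw : Fin q → Fin m)
    -- join key z̄: variables occurring in both t̄ and v̄
    (z : Fin s → V) (pzt : Fin s → Fin m) (pzv : Fin s → Fin p)
    (hzt : ∀ l, t (pzt l) = Sum.inr (z l))
    (hzv : ∀ l, v (pzv l) = Sum.inr (z l))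
    (hzcover : ∀ x : V, (∃ i, t i = Sum.inr x) → (∃ j, v j = Sum.inr x) →
      ∃ l, z l = x) :
    -- MapReduce output = query semantics
    {a : Fin q → D | ∃ b : Fin s → D,
        (∃ f ∈ Rfacts, Conforms f t ∧ (∀ l, f (pzt l) = b l) ∧
          (∀ j, f (posw j) = a j)) ∧
        (∃ g ∈ Tfacts, Conforms g v ∧ ∀ l, g (pzv l) = b l)} =
    {a : Fin q → D | ∃ f ∈ Rfacts, Conforms f t ∧ (∀ j, f (posw j) = a j) ∧
        ∃ g ∈ Tfacts, Conforms g v ∧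
          ∀ (i : Fin m) (j : Fin p) (x : V),
            t i = Sum.inr x → v j = Sum.inr x → f i = g j} := by
  ext a
  constructor
  · rintro ⟨b, ⟨f, hf, hft, hfb, hfa⟩, g, hg, hgv, hgb⟩
    refine ⟨f, hf, hft, hfa, g, hg, hgv, ?_⟩
    exact (agreeOnSharedVars_iff_forall_key_eq hft hgv hzt hzv hzcover).2
      fun l => (hfb l).trans (hgb l).symm
  · rintro ⟨f, hf, hft, hfa, g, hg, hgv, hagree⟩
    have hkey := (agreeOnSharedVars_iff_forall_key_eq hft hgv hzt hzv hzcover).1 hagree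
    exact ⟨f ∘ pzt, ⟨f, hf, hft, fun _ => rfl, hfa⟩, g, hg, hgv, fun l => (hkey l).symm⟩

/-- Correctness of the one-round repartition-join MapReduce evaluation of a
single semi-join `Z := SELECT w̄ FROM α WHERE κ` with guard atom `α = R(t̄)`
(term vector `t`), conditional atom `κ` (term vector `v`), output variables
`w` occurring in `t` at positions `posw`, and join key `z` (the variables
common to `t` and `v`) occurring at positions `pzt` in `t` and `pzv` in `v`.

The set of tuples output by the reduce stage — an output tuple `ā` for a
request message with key `b̄` in a group containing an assert message with the
same key — equals the result of the query. -/
theorem repartition_join_correct {D V : Type*} {m p q s : ℕ}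
    (t : Fin m → D ⊕ V) (v : Fin p → D ⊕ V)
    (Rfacts : Set (Fin m → D)) (Tfacts : Set (Fin p → D))
    -- output variables w̄ and their positions in the guard
    (w : Fin q → V) (posw : Fin q → Fin m)
    (hw : ∀ j, t (posw j) = Sum.inr (w j))
    -- join key z̄: variables occurring in both t̄ and v̄
    (z : Fin s → V) (pzt : Fin s → Fin m) (pzv : Fin s → Fin p)
    (hzt : ∀ l, t (pzt l) = Sum.inr (z l))
    (hzv : ∀ l, v (pzv l) = Sum.inr (z l))
    (hzcover : ∀ x : V, (∃ i, t i = Sum.inr x) → (∃ j, v j = Sum.inr x) →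
      ∃ l, z l = x) :
    -- MapReduce output = query semantics
    {a : Fin q → D | ∃ b : Fin s → D,
        (∃ f ∈ Rfacts, Conforms f t ∧ (∀ l, f (pzt l) = b l) ∧
          (∀ j, f (posw j) = a j)) ∧
        (∃ g ∈ Tfacts, Conforms g v ∧ ∀ l, g (pzv l) = b l)} =
    {a : Fin q → D | ∃ f ∈ Rfacts, Conforms f t ∧ (∀ j, f (posw j) = a j) ∧
        ∃ g ∈ Tfacts, Conforms g v ∧
          ∀ (i : Fin m) (j : Fin p) (x : V),
            t i = Sum.inr x → v j = Sum.inr x → f i = g j} :=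
  repartition_join_correct_general t v Rfacts Tfacts posw z pzt pzv hzt hzv hzcover
end

section
/- Decomposition of BSGF queries into semi-joins and a Boolean combination is correct: for a basic query Z := SELECT w̄ FROM R(t̄) WHERE C with conditional atoms κ_1,...,κ_n, if X_i = SELECT w̄ FROM R(t̄) WHERE κ_i for each i, and φ_C is C with each κ_i replaced by X_i, then Z equals {π_{t̄;w̄}(f) : f ∈ DB, f ⊨ R(t̄), φ_C true at π_{t̄;w̄}(f) under membership in the X_i} — provided w̄ contains all variables of t̄ that occur in any κ_i. -/
/-- Boolean formulas over `n` propositional variables (the conditional atoms). -/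
inductive BForm (n : ℕ) : Type
  | var : Fin n → BForm n
  | and : BForm n → BForm n → BForm n
  | or : BForm n → BForm n → BForm n
  | not : BForm n → BForm n

/-- Evaluation of a Boolean formula under a valuation. -/
def BForm.eval {n : ℕ} : BForm n → (Fin n → Prop) → Prop
  | .var i, v => v i
  | .and f g, v => f.eval v ∧ g.eval v
  | .or f g, v => f.eval v ∨ g.eval v
  | .not f, v => ¬ f.eval v

theorem BForm.eval_congr {n : ℕ} (φ : BForm n) {v v' : Fin n → Prop}
    (h : ∀ i, v i ↔ v' i) : φ.eval v ↔ φ.eval v' := by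
  induction φ with
  | var i => exact h i
  | and f g hf hg => exact and_congr hf hg
  | or f g hf hg => exact or_congr hf hg
  | not f hf => exact not_congr hf

theorem BForm.setOf_exists_eval_eq {n : ℕ} {α β : Type*} (φ : BForm n) (G : α → β → Prop)
    (P : Fin n → α → Prop) (hP : ∀ i f f' b, G f b → G f' b → P i f' → P i f) :
    {b | ∃ f, G f b ∧ φ.eval (fun i => P i f)} =
      {b | ∃ f, G f b ∧ φ.eval (fun i => ∃ f', G f' b ∧ P i f')} := by
  ext b
  refine exists_congr fun f => and_congr_right fun hf => φ.eval_congr fun i => ?_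
  exact ⟨fun h => ⟨f, hf, h⟩, fun ⟨f', hf', h⟩ => hP i f f' b hf hf' h⟩

section Semijoin

variable {D V : Type*} {m p : ℕ}

/-- The semi-join condition `f ∈ R(t̄) ⋉ κ`: some fact of `T` conforming to `κ` agrees with `f`
on every variable shared by `t̄` and `κ`. -/
def SemijoinHolds (t : Fin m → D ⊕ V) (κ : Fin p → D ⊕ V) (T : Set (Fin p → D))
    (f : Fin m → D) : Prop :=
  ∃ g ∈ T, Conforms g κ ∧
    ∀ (a : Fin m) (b : Fin p) (x : V), t a = Sum.inr x → κ b = Sum.inr x → f a = g b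

theorem SemijoinHolds.of_eqOn_shared {t : Fin m → D ⊕ V} {κ : Fin p → D ⊕ V}
    {T : Set (Fin p → D)} {f f' : Fin m → D}
    (hff' : ∀ a x, t a = Sum.inr x → (∃ b, κ b = Sum.inr x) → f a = f' a)
    (h : SemijoinHolds t κ T f') : SemijoinHolds t κ T f := by
  obtain ⟨g, hg, hgκ, hagree⟩ := h
  exact ⟨g, hg, hgκ, fun a b x hta hκb => (hff' a x hta ⟨b, hκb⟩).trans (hagree a b x hta hκb)⟩

theorem Conforms.apply_eq_of_proj_eq {q : ℕ} {t : Fin m → D ⊕ V} {f f' : Fin m → D}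
    (hf : Conforms f t) (hf' : Conforms f' t) {w : Fin q → V} {posw : Fin q → Fin m}
    (hw : ∀ j, t (posw j) = Sum.inr (w j)) (hproj : ∀ j, f (posw j) = f' (posw j))
    {a : Fin m} {l : Fin q} (hal : t a = Sum.inr (w l)) : f a = f' a :=
  calc f a = f (posw l) := hf.1 a (posw l) (by rw [hal, hw])
    _ = f' (posw l) := hproj l
    _ = f' a := hf'.1 (posw l) a (by rw [hal, hw])

end Semijoin

/-- Correctness of the decomposition of a BSGF query
`Z := SELECT w̄ FROM R(t̄) WHERE C` into semi-joins and a Boolean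
combination.  Here `t` is the guard term vector, `Rfacts` its facts; `κ i`
are the conditional atoms with fact sets `Tfacts i`; `C` is the Boolean
combination `φ` of the atoms; `w` are the output variables, at positions
`posw` of the guard.  `κHolds i f` expresses that atom `κ_i` is true for
guard fact `f` (some `κ_i`-fact agrees with `f` on shared variables), and
`X i` is the semi-join `SELECT w̄ FROM R(t̄) WHERE κ_i`.  Provided `w̄`
contains every variable of `t̄` occurring in some `κ_i`, the query result
equals the guard tuples on which `φ_C` holds with the atoms replaced by
membership in the `X_i`. -/
theorem bsgf_decomposition_correct {D V : Type*} {m q n : ℕ}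
    (t : Fin m → D ⊕ V) (Rfacts : Set (Fin m → D))
    (p : Fin n → ℕ) (κ : (i : Fin n) → Fin (p i) → D ⊕ V)
    (Tfacts : (i : Fin n) → Set (Fin (p i) → D))
    (φ : BForm n)
    (w : Fin q → V) (posw : Fin q → Fin m)
    (hw : ∀ j, t (posw j) = Sum.inr (w j))
    -- w̄ contains all variables of t̄ occurring in any κ_i
    (hcover : ∀ x : V, (∃ i, t i = Sum.inr x) →
      (∃ (i : Fin n) (b : Fin (p i)), κ i b = Sum.inr x) →
      ∃ l, w l = x)
    -- truth of conditional atom κ_i at a guard fact f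
    (κHolds : Fin n → (Fin m → D) → Prop)
    (hκ : ∀ i f, κHolds i f ↔
      ∃ g ∈ Tfacts i, Conforms g (κ i) ∧
        ∀ (a : Fin m) (b : Fin (p i)) (x : V),
          t a = Sum.inr x → κ i b = Sum.inr x → f a = g b)
    -- the semi-join results X_i, projected onto w̄
    (X : Fin n → Set (Fin q → D))
    (hX : ∀ i, X i = {a | ∃ f ∈ Rfacts, Conforms f t ∧
      (∀ j, f (posw j) = a j) ∧ κHolds i f}) :
    -- query semantics = evaluation via the X_i
    {a : Fin q → D | ∃ f ∈ Rfacts, Conforms f t ∧ (∀ j, f (posw j) = a j) ∧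
        φ.eval (fun i => κHolds i f)} =
    {a : Fin q → D | ∃ f ∈ Rfacts, Conforms f t ∧ (∀ j, f (posw j) = a j) ∧
        φ.eval (fun i => a ∈ X i)} := by
  have hinv : ∀ i (f f' : Fin m → D) (a : Fin q → D),
      (f ∈ Rfacts ∧ Conforms f t ∧ ∀ j, f (posw j) = a j) →
      (f' ∈ Rfacts ∧ Conforms f' t ∧ ∀ j, f' (posw j) = a j) → κHolds i f' → κHolds i f := by
    rintro i f f' a ⟨-, hf, hfa⟩ ⟨-, hf', hf'a⟩ h
    rw [hκ] at h ⊢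
    refine SemijoinHolds.of_eqOn_shared (fun c x htc hκx => ?_) h
    obtain ⟨l, rfl⟩ := hcover x ⟨c, htc⟩ ⟨i, hκx⟩
    exact hf.apply_eq_of_proj_eq hf' hw (fun j => (hfa j).trans (hf'a j).symm) htc
  have h := φ.setOf_exists_eval_eq _ κHolds hinv
  simp only [and_assoc] at h
  simp only [h, hX, Set.mem_ofPred_eq]
end
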